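/- arXiv:2211.06619 — 4 statements merged into one kernel-verified Lean document; each statement's English description precedes it below -/
import Mathlib

section
/- For any complex vector z ∈ ℂ^m, nonnegative data vector f ∈ ℝ^m, and β > 0, the minimizer of x ↦ (1/2)‖√f − |x|‖² + (β/2)‖x − z‖² over x ∈ ℂ^m is given componentwise by x(t) = ((√f(t) + β|z(t)|)/(1+β))·sign(z(t)) whenever z(t) ≠ 0, where sign(z) = z/|z|. In particular the proximal mapping of the amplitude Gaussian metric has this closed form. -/
/-!
Both terms of the objective decouple over coordinates. In one coordinate, the reverse triangle
inequality `|‖x‖ - ‖z‖| ≤ ‖x - z‖` bounds the objective below by a function of `s = ‖x‖` alone,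
namely `(1/2)(√f - s)² + (β/2)(s - ‖z‖)²`, with equality when `x` is a nonnegative multiple of
`sign z`. This one-variable quadratic is minimised at the weighted mean `(√f + β‖z‖)/(1+β)`, and
the proposed minimiser is exactly that multiple of `sign z`.
-/

namespace Complex

theorem norm_ofReal_mul_div_norm {z : ℂ} (hz : z ≠ 0) (r : ℝ) :
    ‖(r : ℂ) * (z / ‖z‖)‖ = |r| := by
  have : ‖z‖ ≠ 0 := norm_ne_zero_iff.mpr hz
  rw [norm_mul, norm_div, norm_real, norm_real, Real.norm_eq_abs, norm_norm, div_self this,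
    mul_one]

theorem norm_ofReal_mul_div_norm_sub {z : ℂ} (hz : z ≠ 0) (r : ℝ) :
    ‖(r : ℂ) * (z / ‖z‖) - z‖ = |r - ‖z‖| := by
  have : (‖z‖ : ℂ) ≠ 0 := ofReal_ne_zero.mpr (norm_ne_zero_iff.mpr hz)
  have hpolar : (r : ℂ) * (z / ‖z‖) - z = ((r - ‖z‖ : ℝ) : ℂ) * (z / ‖z‖) := by
    push_cast
    field_simp
  rw [hpolar, norm_ofReal_mul_div_norm hz]

end Complex

namespace AGM

/-- With `a = √f(t)` and `b = ‖z(t)‖`: the one-coordinate objective in the amplitude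
`s = ‖x(t)‖`. -/
noncomputable def amplitudeObjective (a b β s : ℝ) : ℝ :=
  (1 / 2) * (a - s) ^ 2 + (β / 2) * (s - b) ^ 2

theorem amplitudeObjective_eq (a b : ℝ) {β : ℝ} (hβ : 0 ≤ β) (s : ℝ) :
    amplitudeObjective a b β s =
      amplitudeObjective a b β ((a + β * b) / (1 + β)) +
        ((1 + β) / 2) * (s - (a + β * b) / (1 + β)) ^ 2 := by
  have : 1 + β ≠ 0 := by positivity
  unfold amplitudeObjective
  field_simp
  ring

theorem amplitudeObjective_weightedMean_le (a b : ℝ) {β : ℝ} (hβ : 0 ≤ β) (s : ℝ) :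
    amplitudeObjective a b β ((a + β * b) / (1 + β)) ≤ amplitudeObjective a b β s := by
  rw [amplitudeObjective_eq a b hβ s]
  exact le_add_of_nonneg_right (by positivity)

theorem amplitudeObjective_norm_le {a β : ℝ} (hβ : 0 ≤ β) (x z : ℂ) :
    amplitudeObjective a ‖z‖ β ‖x‖ ≤ (1 / 2) * (a - ‖x‖) ^ 2 + (β / 2) * ‖x - z‖ ^ 2 := by
  have hsq : (‖x‖ - ‖z‖) ^ 2 ≤ ‖x - z‖ ^ 2 := by
    rw [← sq_abs]
    exact pow_le_pow_left₀ (abs_nonneg _) (abs_norm_sub_norm_le x z) 2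
  unfold amplitudeObjective
  gcongr

theorem prox_coordinate {a β : ℝ} (ha : 0 ≤ a) (hβ : 0 ≤ β) {z : ℂ} (hz : z ≠ 0) (x : ℂ) :
    (1 / 2) * (a - ‖(((a + β * ‖z‖) / (1 + β) : ℝ) : ℂ) * (z / ‖z‖)‖) ^ 2 +
        (β / 2) * ‖(((a + β * ‖z‖) / (1 + β) : ℝ) : ℂ) * (z / ‖z‖) - z‖ ^ 2 ≤
      (1 / 2) * (a - ‖x‖) ^ 2 + (β / 2) * ‖x - z‖ ^ 2 := by
  have hr : 0 ≤ (a + β * ‖z‖) / (1 + β) := by positivity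
  rw [Complex.norm_ofReal_mul_div_norm hz, Complex.norm_ofReal_mul_div_norm_sub hz,
    abs_of_nonneg hr, sq_abs]
  exact (amplitudeObjective_weightedMean_le a ‖z‖ hβ ‖x‖).trans
    (amplitudeObjective_norm_le hβ x z)

end AGM

theorem prox_AGM_closed_form_general (m : ℕ) (z : Fin m → ℂ) (f : Fin m → ℝ)
    (β : ℝ) (hβ : 0 < β) (hz : ∀ t, z t ≠ 0)
    (xstar : Fin m → ℂ)
    (hxstar : ∀ t, xstar t =
      (((Real.sqrt (f t) + β * ‖z t‖) / (1 + β) : ℝ) : ℂ) *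
        (z t / (‖z t‖ : ℂ))) :
    ∀ x : Fin m → ℂ,
      (1 / 2) * ∑ t, (Real.sqrt (f t) - ‖xstar t‖) ^ 2 +
          (β / 2) * ∑ t, ‖xstar t - z t‖ ^ 2 ≤
        (1 / 2) * ∑ t, (Real.sqrt (f t) - ‖x t‖) ^ 2 +
          (β / 2) * ∑ t, ‖x t - z t‖ ^ 2 := by
  intro x
  simp only [Finset.mul_sum, ← Finset.sum_add_distrib]
  refine Finset.sum_le_sum fun t _ => ?_
  rw [hxstar t]
  exact AGM.prox_coordinate (Real.sqrt_nonneg _) hβ.le (hz t) (x t)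

/-- Proximal mapping of the amplitude Gaussian metric (AGM): the minimizer of
`x ↦ (1/2)‖√f − |x|‖² + (β/2)‖x − z‖²` is given componentwise by
`((√f(t) + β|z(t)|)/(1+β))·sign(z(t))` when `z(t) ≠ 0`. -/
theorem prox_AGM_closed_form (m : ℕ) (z : Fin m → ℂ) (f : Fin m → ℝ)
    (hf : ∀ t, 0 ≤ f t) (β : ℝ) (hβ : 0 < β) (hz : ∀ t, z t ≠ 0)
    (xstar : Fin m → ℂ)
    (hxstar : ∀ t, xstar t =
      (((Real.sqrt (f t) + β * ‖z t‖) / (1 + β) : ℝ) : ℂ) *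
        (z t / (‖z t‖ : ℂ))) :
    ∀ x : Fin m → ℂ,
      (1 / 2) * ∑ t, (Real.sqrt (f t) - ‖xstar t‖) ^ 2 +
          (β / 2) * ∑ t, ‖xstar t - z t‖ ^ 2 ≤
        (1 / 2) * ∑ t, (Real.sqrt (f t) - ‖x t‖) ^ 2 +
          (β / 2) * ∑ t, ‖x t - z t‖ ^ 2 :=
  prox_AGM_closed_form_general m z f β hβ hz xstar hxstar
end

section
/- For the ptychographic bilinear operator A(w,u) with frames A_j(w,u) = F(w ∘ S_j u), the adjoint of the linear map A_w : u ↦ A(w,u) satisfies A_w* A_w u = (∑_j S_jᵀ |w|²) ∘ u; in particular A_w* A_w is a diagonal (componentwise multiplication) operator on ℂ^n. -/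
/-!
On a single frame, unitarity of `F` removes the Fourier transform, and
`conj (w s * u (σ s)) * (w s * v (σ s)) = ‖w s‖² * conj (u (σ s)) * v (σ s)`; regrouping the sum
over `s` by the fibres of the patch map `σ` gives the weight `∑_{σ s = i} ‖w s‖²` at each
pixel `i`. Summing over the frames adds the weights.
-/

open Finset

section PatchSums

variable {𝕜 ι κ : Type*} [RCLike 𝕜] [Fintype ι]

theorem sum_conj_mul_mul_self_eq_sum_norm_sq_mul (σ : ι → κ) (w : ι → 𝕜) (u v : κ → 𝕜) :
    ∑ s, (starRingEnd 𝕜) (w s * u (σ s)) * (w s * v (σ s)) =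
      ∑ s, ((‖w s‖ ^ 2 : ℝ) : 𝕜) * ((starRingEnd 𝕜) (u (σ s)) * v (σ s)) := by
  refine sum_congr rfl fun s _ => ?_
  rw [map_mul, RCLike.ofReal_pow, ← RCLike.conj_mul]
  ring

variable [Fintype κ] [DecidableEq κ]

theorem sum_comp_eq_sum_fiber (σ : ι → κ) (c : ι → ℝ) (f : κ → 𝕜) :
    ∑ s, (c s : 𝕜) * f (σ s) = ∑ i, ((∑ s, if σ s = i then c s else 0 : ℝ) : 𝕜) * f i := by
  simp only [RCLike.ofReal_sum, apply_ite ((↑) : ℝ → 𝕜), RCLike.ofReal_zero, sum_mul,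
    ite_mul, zero_mul]
  rw [sum_comm]
  exact sum_congr rfl fun s _ =>
    ((sum_ite_eq univ (σ s) fun i => (c s : 𝕜) * f i).trans (if_pos (mem_univ _))).symm

theorem sum_conj_mul_comp_eq_sum_fiber_norm_sq (σ : ι → κ) (w : ι → 𝕜) (u v : κ → 𝕜) :
    ∑ s, (starRingEnd 𝕜) (w s * u (σ s)) * (w s * v (σ s)) =
      ∑ i, (starRingEnd 𝕜) (u i) *
        (((∑ s, if σ s = i then ‖w s‖ ^ 2 else 0 : ℝ) : 𝕜) * v i) := by
  rw [sum_conj_mul_mul_self_eq_sum_norm_sq_mul, sum_comp_eq_sum_fiber σ _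
    fun i => (starRingEnd 𝕜) (u i) * v i]
  exact sum_congr rfl fun i _ => by ring

end PatchSums

open Complex in
/-- `S_j u` is encoded as `u ∘ σ j`, unitarity of `F` as `hF`, and `A_w* A_w = diag(∑_j S_jᵀ|w|²)`
as the identity of forms `⟪A_w u, A_w v⟫ = ⟪u, (∑_j S_jᵀ|w|²) ∘ v⟫`. -/
theorem ptycho_AwStar_Aw_diagonal (mbar n J : ℕ)
    (F : (Fin mbar → ℂ) →ₗ[ℂ] (Fin mbar → ℂ))
    (hF : ∀ a b : Fin mbar → ℂ,
      ∑ t, (starRingEnd ℂ) (F a t) * F b t = ∑ t, (starRingEnd ℂ) (a t) * b t)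
    (σ : Fin J → Fin mbar → Fin n) (w : Fin mbar → ℂ) :
    ∀ u v : Fin n → ℂ,
      ∑ j, ∑ t, (starRingEnd ℂ) (F (fun s => w s * u (σ j s)) t) *
          F (fun s => w s * v (σ j s)) t =
        ∑ i, (starRingEnd ℂ) (u i) *
          (((∑ j, ∑ s, if σ j s = i then ‖w s‖ ^ 2 else 0 : ℝ) : ℂ) * v i) := by
  intro u v
  simp only [hF, sum_conj_mul_comp_eq_sum_fiber_norm_sq (𝕜 := ℂ)]
  rw [sum_comm]
  refine sum_congr rfl fun i _ => ?_
  rw [ofReal_sum, sum_mul, mul_sum]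
  rfl -- the sides differ only in the coercion `ℝ → ℂ`: `RCLike.ofReal` versus `Complex.ofReal`
end

section
/- ST-AGM preserves global minimizers: for fixed b > 0 and ε ∈ (0,1), the set of global minimizers of x ↦ M_ε(x,b) over x ∈ ℂ equals the set of global minimizers of x ↦ (1/2)(|x| − √b)² (the AGM), namely the circle {x : |x| = √b}. -/
/-!
Both functions are nonnegative and vanish exactly on the circle `‖x‖ = √b`, so that circle is the
set of global minimizers of each. Outside the disc `‖x‖ < ε√b` the two functions agree; inside it
`‖x‖² / ε < ε b < b`, so the smoothed branch is strictly positive because `ε < 1`.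
-/

open Real

/-- `M_ε(x, b)` as a function of `r = ‖x‖`. -/
noncomputable def stProfile (ε b r : ℝ) : ℝ :=
  if r < ε * √b then (1 - ε) / 2 * (b - r ^ 2 / ε) else 1 / 2 * (r - √b) ^ 2

lemma half_mul_sq_sub_eq_zero_iff {r s : ℝ} : 1 / 2 * (r - s) ^ 2 = 0 ↔ r = s := by
  simp [sub_eq_zero]

lemma stProfile_inner_pos {ε b r : ℝ} (hε1 : ε < 1) (hr : 0 ≤ r) (hlt : r < ε * √b) :
    0 < (1 - ε) / 2 * (b - r ^ 2 / ε) := by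
  have hpos : 0 < ε * √b := hr.trans_lt hlt
  have hε : 0 < ε := pos_of_mul_pos_left hpos (sqrt_nonneg b)
  have hb : 0 < b := sqrt_pos.1 (pos_of_mul_pos_right hpos hε.le)
  have hsq : r ^ 2 < ε ^ 2 * b :=
    calc r ^ 2 < (ε * √b) ^ 2 := by gcongr
      _ = ε ^ 2 * b := by rw [mul_pow, sq_sqrt hb.le]
  have hdiv : r ^ 2 / ε < b := by
    rw [div_lt_iff₀ hε]
    nlinarith
  exact mul_pos (by linarith) (by linarith)

lemma stProfile_nonneg {ε b r : ℝ} (hε1 : ε < 1) (hr : 0 ≤ r) : 0 ≤ stProfile ε b r := by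
  unfold stProfile
  split_ifs with hlt
  · exact (stProfile_inner_pos hε1 hr hlt).le
  · positivity

lemma stProfile_eq_zero_iff {ε b r : ℝ} (hε1 : ε < 1) (hr : 0 ≤ r) :
    stProfile ε b r = 0 ↔ r = √b := by
  unfold stProfile
  split_ifs with hlt
  · exact iff_of_false (stProfile_inner_pos hε1 hr hlt).ne'
      (hlt.trans_le (mul_le_of_le_one_left (sqrt_nonneg b) hε1.le)).ne
  · exact half_mul_sq_sub_eq_zero_iff

lemma forall_le_iff_eq_zero {α β : Type*} [PartialOrder β] [Zero β] {f : α → β}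
    (hf : ∀ y, 0 ≤ f y) {a : α} (ha : f a = 0) (x : α) : (∀ y, f x ≤ f y) ↔ f x = 0 :=
  ⟨fun h => le_antisymm (ha ▸ h a) (hf x), fun h y => h ▸ hf y⟩

lemma forall_le_iff_norm_eq {E : Type*} [NormedAddCommGroup E] [NormedSpace ℝ E] [Nontrivial E]
    {f : E → ℝ} {s : ℝ} (hs : 0 ≤ s) (hf : ∀ y, 0 ≤ f y) (hzero : ∀ y, f y = 0 ↔ ‖y‖ = s)
    (x : E) : (∀ y, f x ≤ f y) ↔ ‖x‖ = s := by
  obtain ⟨a, ha⟩ := exists_norm_eq E hs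
  rw [forall_le_iff_eq_zero hf ((hzero a).2 ha), hzero]

theorem ST_AGM_same_minimizers_general (ε b : ℝ) (hε1 : ε < 1)
    (M : ℂ → ℝ)
    (hM : ∀ x : ℂ, M x =
      if ‖x‖ < ε * Real.sqrt b then
        ((1 - ε) / 2) * (b - ‖x‖ ^ 2 / ε)
      else (1 / 2) * (‖x‖ - Real.sqrt b) ^ 2)
    (G : ℂ → ℝ) (hG : ∀ x : ℂ, G x = (1 / 2) * (‖x‖ - Real.sqrt b) ^ 2) :
    (∀ x : ℂ, (∀ y, M x ≤ M y) ↔ (∀ y, G x ≤ G y)) ∧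
    (∀ x : ℂ, (∀ y, M x ≤ M y) ↔ ‖x‖ = Real.sqrt b) := by
  obtain rfl : M = fun x => stProfile ε b ‖x‖ := funext hM
  obtain rfl : G = fun x => 1 / 2 * (‖x‖ - √b) ^ 2 := funext hG
  have hM_min := forall_le_iff_norm_eq (sqrt_nonneg b)
    (fun y : ℂ => stProfile_nonneg hε1 (norm_nonneg y))
    (fun y : ℂ => stProfile_eq_zero_iff hε1 (norm_nonneg y))
  have hG_min := forall_le_iff_norm_eq (sqrt_nonneg b) (fun y : ℂ => by positivity)
    (fun y : ℂ => half_mul_sq_sub_eq_zero_iff)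
  exact ⟨fun x => (hM_min x).trans (hG_min x).symm, hM_min⟩

/-- ST-AGM preserves global minimizers: for `b > 0` and `ε ∈ (0,1)`, the global
minimizers of `x ↦ M_ε(x,b)` coincide with those of the AGM `x ↦ (1/2)(|x|−√b)²`,
namely the circle `{x : |x| = √b}`. -/
theorem ST_AGM_same_minimizers (ε b : ℝ) (hε : 0 < ε) (hε1 : ε < 1) (hb : 0 < b)
    (M : ℂ → ℝ)
    (hM : ∀ x : ℂ, M x =
      if ‖x‖ < ε * Real.sqrt b then
        ((1 - ε) / 2) * (b - ‖x‖ ^ 2 / ε)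
      else (1 / 2) * (‖x‖ - Real.sqrt b) ^ 2)
    (G : ℂ → ℝ) (hG : ∀ x : ℂ, G x = (1 / 2) * (‖x‖ - Real.sqrt b) ^ 2) :
    (∀ x : ℂ, (∀ y, M x ≤ M y) ↔ (∀ y, G x ≤ G y)) ∧
    (∀ x : ℂ, (∀ y, M x ≤ M y) ↔ ‖x‖ = Real.sqrt b) :=
  ST_AGM_same_minimizers_general ε b hε1 M hM G hG
end

section
/- Closed form proximal map of ST-AGM (scalar outer case): for y ∈ ℂ, b ≥ 0, ε ∈ (0,1), β > (1−ε)/ε, if |y| ≥ ε − ((1−ε)/β)√b then the minimizer of x ↦ M_ε(x,b) + (β/2)|x − y|² restricted to {x : |x| ≥ ε√b} equals ((√b + β|y|)/(1+β))·sign(y) whenever this value has modulus ≥ ε√b and y ≠ 0. -/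
/-!
Along the ray through `y` the objective reduces to the scalar quadratic
`s ↦ (1/2)(s - √b)² + (β/2)(s - ‖y‖)²`, which equals its value at `ρ*` plus
`((1+β)/2)(s - ρ*)²`. Off the ray, replacing `‖x - y‖` by the smaller `|‖x‖ - ‖y‖|` only
lowers the objective, and `x* = ρ*·y/‖y‖` attains that lower bound exactly, so `x*` is
even a global minimizer; the constraint `‖x‖ ≥ ε√b` only enters through `ρ* ≥ ε√b`.
-/

theorem two_term_quadratic_le {c r β ρ : ℝ} (hβ : 0 ≤ 1 + β)
    (hρ : (1 + β) * ρ = c + β * r) (s : ℝ) :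
    (1 / 2) * (ρ - c) ^ 2 + (β / 2) * (ρ - r) ^ 2 ≤
      (1 / 2) * (s - c) ^ 2 + (β / 2) * (s - r) ^ 2 := by
  have hsplit : (1 / 2) * (s - c) ^ 2 + (β / 2) * (s - r) ^ 2 =
      (1 / 2) * (ρ - c) ^ 2 + (β / 2) * (ρ - r) ^ 2 + ((1 + β) / 2) * (s - ρ) ^ 2 := by
    linear_combination (s - ρ) * hρ
  rw [hsplit]
  have : 0 ≤ ((1 + β) / 2) * (s - ρ) ^ 2 := by positivity
  linarith

section NormedSpace

variable {E : Type*} [NormedAddCommGroup E] [NormedSpace ℝ E] {y : E}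

theorem norm_div_norm_smul (hy : y ≠ 0) (t : ℝ) : ‖(t / ‖y‖) • y‖ = |t| := by
  have hy' : ‖y‖ ≠ 0 := norm_ne_zero_iff.mpr hy
  rw [norm_smul, Real.norm_eq_abs, abs_div, abs_norm, div_mul_cancel₀ _ hy']

theorem norm_div_norm_smul_sub (hy : y ≠ 0) (t : ℝ) : ‖(t / ‖y‖) • y - y‖ = |t - ‖y‖| := by
  have hy' : ‖y‖ ≠ 0 := norm_ne_zero_iff.mpr hy
  have hray : (t / ‖y‖) • y - y = ((t - ‖y‖) / ‖y‖) • y := by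
    rw [sub_div, div_self hy', sub_smul, one_smul]
  rw [hray, norm_div_norm_smul hy]

theorem radial_objective_le {c β ρ : ℝ} (hy : y ≠ 0) (hβ : 0 ≤ β) (hρ0 : 0 ≤ ρ)
    (hρ : (1 + β) * ρ = c + β * ‖y‖) (x : E) :
    (1 / 2) * (‖(ρ / ‖y‖) • y‖ - c) ^ 2 + (β / 2) * ‖(ρ / ‖y‖) • y - y‖ ^ 2 ≤
      (1 / 2) * (‖x‖ - c) ^ 2 + (β / 2) * ‖x - y‖ ^ 2 := by
  rw [norm_div_norm_smul hy, abs_of_nonneg hρ0, norm_div_norm_smul_sub hy, sq_abs]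
  have hreverse : (‖x‖ - ‖y‖) ^ 2 ≤ ‖x - y‖ ^ 2 :=
    sq_le_sq' (by linarith [norm_sub_norm_le y x, norm_sub_rev y x]) (norm_sub_norm_le x y)
  calc (1 / 2) * (ρ - c) ^ 2 + (β / 2) * (ρ - ‖y‖) ^ 2
      ≤ (1 / 2) * (‖x‖ - c) ^ 2 + (β / 2) * (‖x‖ - ‖y‖) ^ 2 :=
        two_term_quadratic_le (by linarith) hρ ‖x‖
    _ ≤ (1 / 2) * (‖x‖ - c) ^ 2 + (β / 2) * ‖x - y‖ ^ 2 := by gcongr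

end NormedSpace

theorem prox_ST_AGM_outer_general (y : ℂ) (hy0 : y ≠ 0) (b : ℝ)
    (ε : ℝ) (hε : 0 < ε) (hε1 : ε < 1) (β : ℝ) (hβ : (1 - ε) / ε < β)
    (ρstar : ℝ) (hρdef : ρstar = (Real.sqrt b + β * ‖y‖) / (1 + β))
    (hρ : ε * Real.sqrt b ≤ ρstar)
    (xstar : ℂ)
    (hxstar : xstar = (ρstar : ℂ) * (y / (‖y‖ : ℂ))) :
    ε * Real.sqrt b ≤ ‖xstar‖ ∧
    ∀ x : ℂ, ε * Real.sqrt b ≤ ‖x‖ →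
      (1 / 2) * (‖xstar‖ - Real.sqrt b) ^ 2 +
          (β / 2) * ‖xstar - y‖ ^ 2 ≤
        (1 / 2) * (‖x‖ - Real.sqrt b) ^ 2 +
          (β / 2) * ‖x - y‖ ^ 2 := by
  have hβ0 : 0 ≤ β := ((div_pos (by linarith) hε).trans hβ).le
  have hρ0 : 0 ≤ ρstar := (mul_nonneg hε.le (Real.sqrt_nonneg b)).trans hρ
  have hρeq : (1 + β) * ρstar = Real.sqrt b + β * ‖y‖ := by
    rw [hρdef]; field_simp
  have hsmul : xstar = (ρstar / ‖y‖) • y := by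
    rw [hxstar, Complex.real_smul]; push_cast; ring
  subst hsmul
  refine ⟨?_, fun x _ => radial_objective_le hy0 hβ0 hρ0 hρeq x⟩
  rwa [norm_div_norm_smul hy0, abs_of_nonneg hρ0]

/-- Closed form of the proximal map of the smooth truncated AGM on the outer
region: for `y ≠ 0`, `b ≥ 0`, `ε ∈ (0,1)`, `β > (1−ε)/ε`, if
`|y| ≥ ε − ((1−ε)/β)√b` and `ρ* := (√b + β|y|)/(1+β) ≥ ε√b`, then
`x* = ρ*·sign(y)` minimizes `x ↦ (1/2)(|x|−√b)² + (β/2)|x−y|²` over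
`{x : |x| ≥ ε√b}` (on which `M_ε` coincides with the outer branch). -/
theorem prox_ST_AGM_outer (y : ℂ) (hy0 : y ≠ 0) (b : ℝ) (hb : 0 ≤ b)
    (ε : ℝ) (hε : 0 < ε) (hε1 : ε < 1) (β : ℝ) (hβ : (1 - ε) / ε < β)
    (hy : ε - ((1 - ε) / β) * Real.sqrt b ≤ ‖y‖)
    (ρstar : ℝ) (hρdef : ρstar = (Real.sqrt b + β * ‖y‖) / (1 + β))
    (hρ : ε * Real.sqrt b ≤ ρstar)
    (xstar : ℂ)
    (hxstar : xstar = (ρstar : ℂ) * (y / (‖y‖ : ℂ))) :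
    ε * Real.sqrt b ≤ ‖xstar‖ ∧
    ∀ x : ℂ, ε * Real.sqrt b ≤ ‖x‖ →
      (1 / 2) * (‖xstar‖ - Real.sqrt b) ^ 2 +
          (β / 2) * ‖xstar - y‖ ^ 2 ≤
        (1 / 2) * (‖x‖ - Real.sqrt b) ^ 2 +
          (β / 2) * ‖x - y‖ ^ 2 :=
  prox_ST_AGM_outer_general y hy0 b ε hε hε1 β hβ ρstar hρdef hρ xstar hxstar
end
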